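/- arXiv:1707.08393 — 4 statements merged into one kernel-verified Lean document; each statement's English description precedes it below -/
import Mathlib

section
/- The probability measure G_N is invariant under the transformation T_N: for every Borel set A ⊆ I one has G_N(T_N^{-1}(A)) = G_N(A). -/
open MeasureTheory Set Filter
open scoped Classical Topology ENNReal

/-- The N-continued fraction transformation `T_N x = N/x - ⌊N/x⌋` (with `T_N 0 = 0`). -/
noncomputable def TN (N : ℕ) (x : ℝ) : ℝ := (N : ℝ) / x - ⌊(N : ℝ) / x⌋

/-- The invariant (Gauss-type) measure `G_N(A) = (1/log((N+1)/N)) ∫_A dx/(x+N)` on `I = [0,1]`. -/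
noncomputable def GN (N : ℕ) : Measure ℝ :=
  (volume.restrict (Icc (0:ℝ) 1)).withDensity
    (fun x => ENNReal.ofReal ((Real.log ((N+1)/N))⁻¹ * (x + N)⁻¹))

/-!
The distribution function of `G_N` on `[0, 1]` is `t ↦ c log ((t + N) / N)`, where
`c = (log ((N + 1) / N))⁻¹`. For `0 ≤ t < 1`, the set `T_N⁻¹ [0, t] ∩ (0, 1]` is the
disjoint union over `n ≥ 0` of the branches `[N / (N + n + t), N / (N + n)]`, whose
`G_N`-masses are `c (g n - g (n + 1))` with `g n = log (1 + t / (N + n)) → 0`; the series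
telescopes to `c g 0 = c log ((t + N) / N)`. Two finite measures on `ℝ` agreeing on every
`Iic t` are equal, so `T_N` preserves `G_N`.
-/

theorem hasSum_sub_succ_of_antitone {f : ℕ → ℝ} (hf : Antitone f)
    (hf0 : Tendsto f atTop (𝓝 0)) : HasSum (fun n => f n - f (n + 1)) (f 0) := by
  refine (hasSum_iff_tendsto_nat_of_nonneg (fun n => sub_nonneg.2 (hf n.le_succ)) _).2 ?_
  simp_rw [Finset.sum_range_sub']
  simpa using tendsto_const_nhds.sub hf0

theorem Int.fract_le_iff_exists_natCast {R : Type*} [CommRing R] [LinearOrder R]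
    [IsStrictOrderedRing R] [FloorRing R] {y t : R} (hy : 0 ≤ y) (ht : t < 1) :
    Int.fract y ≤ t ↔ ∃ n : ℕ, (n : R) ≤ y ∧ y ≤ n + t := by
  constructor
  · intro h
    refine ⟨⌊y⌋₊, Nat.floor_le hy, ?_⟩
    rw [natCast_floor_eq_intCast_floor hy]
    linarith [Int.floor_add_fract y]
  · rintro ⟨n, hny, hyn⟩
    have : Int.fract y = y - n :=
      Int.fract_eq_iff.2 ⟨sub_nonneg.2 hny, by linarith, n, by simp⟩
    linarith

theorem lintegral_Icc_ofReal_mul_inv_add {c d a b : ℝ} (hc : 0 ≤ c) (had : 0 < a + d)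
    (hab : a ≤ b) :
    ∫⁻ x in Icc a b, ENNReal.ofReal (c * (x + d)⁻¹) =
      ENNReal.ofReal (c * Real.log ((b + d) / (a + d))) := by
  have hpos : ∀ x ∈ Icc a b, 0 < x + d := fun x hx => by linarith [hx.1]
  have hint : IntegrableOn (fun x => c * (x + d)⁻¹) (Icc a b) :=
    (continuousOn_const.mul ((continuousOn_id.add continuousOn_const).inv₀
      fun x hx => (hpos x hx).ne')).integrableOn_Icc
  rw [← ofReal_integral_eq_lintegral_ofReal hint
    ((ae_restrict_iff' measurableSet_Icc).2 (.of_forall fun x hx =>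
      mul_nonneg hc (inv_nonneg.2 (hpos x hx).le))),
    integral_Icc_eq_integral_Ioc, ← intervalIntegral.integral_of_le hab,
    intervalIntegral.integral_const_mul, intervalIntegral.integral_comp_add_right (·⁻¹),
    integral_inv_of_pos had (by linarith)]

noncomputable def gaussConst (N : ℕ) : ℝ := (Real.log ((N + 1) / N))⁻¹

theorem gaussConst_nonneg (N : ℕ) : 0 ≤ gaussConst N := by
  rcases N.eq_zero_or_pos with rfl | hN
  · simp [gaussConst]
  · refine inv_nonneg.2 (Real.log_nonneg ?_)
    rw [le_div_iff₀ (by exact_mod_cast hN)]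
    linarith

noncomputable def gaussMeasure (N : ℕ) : Measure ℝ :=
  volume.withDensity fun x => ENNReal.ofReal (gaussConst N * (x + N)⁻¹)

theorem gaussMeasure_Icc (N : ℕ) {a b : ℝ} (ha : 0 ≤ a) (hab : a ≤ b) :
    gaussMeasure N (Icc a b) = ENNReal.ofReal (gaussConst N * Real.log ((b + N) / (a + N))) := by
  rw [gaussMeasure, withDensity_apply _ measurableSet_Icc]
  rcases N.eq_zero_or_pos with rfl | hN
  · simp [gaussConst]
  · exact lintegral_Icc_ofReal_mul_inv_add (gaussConst_nonneg N)
      (by positivity) hab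

instance (N : ℕ) : NullSingletonClass (gaussMeasure N) := by
  rw [gaussMeasure]
  infer_instance

-- Passing to `(0, 1]` discards the point `0`, which lies in every `T_N⁻¹ [0, t]` but in no
-- branch.
theorem GN_eq_restrict_Ioc (N : ℕ) : GN N = (gaussMeasure N).restrict (Ioc 0 1) := by
  rw [GN, ← restrict_withDensity measurableSet_Icc]
  exact Measure.restrict_congr_set Ioc_ae_eq_Icc.symm

theorem GN_apply (N : ℕ) (s : Set ℝ) : GN N s = gaussMeasure N (s ∩ Ioc 0 1) := by
  rw [GN_eq_restrict_Ioc, Measure.restrict_apply' measurableSet_Ioc]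

theorem GN_Iic (N : ℕ) {t : ℝ} (ht0 : 0 ≤ t) (ht1 : t ≤ 1) :
    GN N (Iic t) = ENNReal.ofReal (gaussConst N * Real.log ((t + N) / N)) := by
  rw [GN_apply, Iic_inter_Ioc_of_le ht1, measure_congr Ioc_ae_eq_Icc,
    gaussMeasure_Icc N le_rfl ht0, zero_add]

instance (N : ℕ) : IsFiniteMeasure (GN N) := by
  rw [GN_eq_restrict_Ioc]
  refine isFiniteMeasure_restrict.2 ((measure_mono Ioc_subset_Icc_self).trans_lt ?_).ne
  exact (gaussMeasure_Icc N le_rfl zero_le_one).trans_lt ENNReal.ofReal_lt_top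

theorem TN_eq_fract (N : ℕ) (x : ℝ) : TN N x = Int.fract (N / x) := rfl

theorem measurable_TN (N : ℕ) : Measurable (TN N) :=
  measurable_fract.comp (measurable_const.div measurable_id)

theorem TN_preimage_Iic_inter_Ioc {N : ℕ} (hN : 1 ≤ N) {t : ℝ} (ht0 : 0 ≤ t) (ht1 : t < 1) :
    TN N ⁻¹' Iic t ∩ Ioc 0 1 = ⋃ n : ℕ, Icc (N / (N + n + t)) (N / (N + n)) := by
  have hN0 : (0 : ℝ) < N := by exact_mod_cast hN
  ext x
  simp only [mem_inter_iff, mem_preimage, mem_Iic, mem_Ioc, mem_iUnion, mem_Icc]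
  constructor
  · rintro ⟨hTx, hx0, hx1⟩
    have hNx : (N : ℝ) ≤ N / x := le_div_self hN0.le hx0 hx1
    rw [TN_eq_fract, ← Int.fract_sub_natCast _ N,
      Int.fract_le_iff_exists_natCast (by linarith) ht1] at hTx
    obtain ⟨n, hn, hnt⟩ := hTx
    refine ⟨n, ?_, ?_⟩
    · rw [div_le_comm₀ (by positivity) hx0]; linarith
    · rw [le_div_comm₀ hx0 (by positivity)]; linarith
  · rintro ⟨n, hxl, hxr⟩
    have hx0 : 0 < x := (by positivity : (0 : ℝ) < N / (N + n + t)).trans_le hxl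
    refine ⟨?_, hx0, hxr.trans ((div_le_one (by positivity)).2 (by simp))⟩
    rw [div_le_comm₀ (by positivity) hx0] at hxl
    rw [le_div_comm₀ hx0 (by positivity)] at hxr
    rw [TN_eq_fract, ← Int.fract_sub_natCast _ N,
      Int.fract_le_iff_exists_natCast (by linarith) ht1]
    exact ⟨n, by linarith, by linarith⟩

theorem antitone_log_one_add_div {a t : ℝ} (ha : 0 < a) (ht : 0 ≤ t) :
    Antitone fun n : ℕ => Real.log (1 + t / (a + n)) :=
  antitone_nat_of_succ_le fun n => Real.log_le_log (by positivity) (by gcongr; simp)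

theorem hasSum_log_one_add_div_sub_succ {a t : ℝ} (ha : 0 < a) (ht : 0 ≤ t) :
    HasSum (fun n : ℕ => Real.log (1 + t / (a + n)) - Real.log (1 + t / (a + (n + 1 : ℕ))))
      (Real.log (1 + t / a)) := by
  have hlim : Tendsto (fun n : ℕ => 1 + t / (a + n)) atTop (𝓝 1) := by
    simpa using tendsto_const_nhds.add
      (tendsto_const_nhds.div_atTop
        (tendsto_atTop_add_const_left _ a tendsto_natCast_atTop_atTop))
  simpa using hasSum_sub_succ_of_antitone (antitone_log_one_add_div ha ht)
    (by simpa [Function.comp_def] using (Real.continuousAt_log one_ne_zero).tendsto.comp hlim)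

theorem log_TN_branch_ratio {N n t : ℝ} (hN : 0 < N) (hn : 0 ≤ n) (ht : 0 ≤ t) :
    Real.log ((N / (N + n) + N) / (N / (N + n + t) + N)) =
      Real.log (1 + t / (N + n)) - Real.log (1 + t / (N + (n + 1))) := by
  rw [← Real.log_div (by positivity) (by positivity)]
  congr 1
  field_simp
  ring

theorem gaussMeasure_TN_branch {N : ℕ} (hN : 1 ≤ N) {t : ℝ} (ht : 0 ≤ t) (n : ℕ) :
    gaussMeasure N (Icc (N / (N + n + t)) (N / (N + n))) = ENNReal.ofReal (gaussConst N *
      (Real.log (1 + t / (N + n)) - Real.log (1 + t / (N + (n + 1 : ℕ))))) := by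
  have hN0 : (0 : ℝ) < N := by exact_mod_cast hN
  rw [gaussMeasure_Icc N (by positivity) (div_le_div_of_nonneg_left hN0.le (by positivity)
    (by linarith)), log_TN_branch_ratio hN0 n.cast_nonneg ht, Nat.cast_succ]

open scoped Function in
theorem pairwise_disjoint_TN_branches {N : ℕ} (hN : 1 ≤ N) {t : ℝ} (ht0 : 0 ≤ t)
    (ht1 : t < 1) :
    Pairwise (Disjoint on fun n : ℕ => Icc ((N : ℝ) / (N + n + t)) (N / (N + n))) := by
  have hN0 : (0 : ℝ) < N := by exact_mod_cast hN
  have hanti : Antitone fun n : ℕ => (N : ℝ) / (N + n) := fun i j hij =>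
    div_le_div_of_nonneg_left hN0.le (by positivity) (by gcongr)
  have hsub (n : ℕ) : Icc ((N : ℝ) / (N + n + t)) (N / (N + n)) ⊆
      Ioc (N / (N + (Order.succ n : ℕ))) (N / (N + n)) := by
    refine Icc_subset_Ioc (div_lt_div_of_pos_left hN0 (by positivity) ?_) le_rfl
    rw [Order.succ_eq_add_one]
    push_cast
    linarith
  exact hanti.pairwise_disjoint_on_Ioc_succ.mono fun i j h => h.mono (hsub i) (hsub j)

theorem GN_TN_preimage_Iic {N : ℕ} (hN : 1 ≤ N) {t : ℝ} (ht0 : 0 ≤ t) (ht1 : t < 1) :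
    GN N (TN N ⁻¹' Iic t) = ENNReal.ofReal (gaussConst N * Real.log ((t + N) / N)) := by
  have hN0 : (0 : ℝ) < N := by exact_mod_cast hN
  have hsum := (hasSum_log_one_add_div_sub_succ hN0 ht0).mul_left (gaussConst N)
  have hterms (n : ℕ) : 0 ≤ gaussConst N *
      (Real.log (1 + t / (N + n)) - Real.log (1 + t / (N + (n + 1 : ℕ)))) :=
    mul_nonneg (gaussConst_nonneg N) (sub_nonneg.2 (antitone_log_one_add_div hN0 ht0 n.le_succ))
  rw [GN_apply, TN_preimage_Iic_inter_Ioc hN ht0 ht1,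
    measure_iUnion (pairwise_disjoint_TN_branches hN ht0 ht1) fun _ => measurableSet_Icc]
  simp_rw [gaussMeasure_TN_branch hN ht0]
  rw [← ENNReal.ofReal_tsum_of_nonneg hterms hsum.summable, hsum.tsum_eq, one_add_div hN0.ne',
    add_comm]

theorem GN_TN_preimage_Iic_eq {N : ℕ} (hN : 1 ≤ N) (t : ℝ) :
    GN N (TN N ⁻¹' Iic t) = GN N (Iic t) := by
  rcases lt_or_ge t 0 with ht0 | ht0
  · have hpre : TN N ⁻¹' Iic t = ∅ :=
      eq_empty_of_forall_notMem fun x hx => (ht0.trans_le (Int.fract_nonneg _)).not_ge hx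
    rw [hpre, measure_empty, GN_apply, Iic_inter_Ioc_of_le (ht0.le.trans zero_le_one),
      Ioc_eq_empty ht0.not_gt, measure_empty]
  rcases lt_or_ge t 1 with ht1 | ht1
  · rw [GN_TN_preimage_Iic hN ht0 ht1, GN_Iic N ht0 ht1.le]
  · have hpre : TN N ⁻¹' Iic t = univ :=
      eq_univ_of_forall fun x => (Int.fract_lt_one _).le.trans ht1
    rw [hpre, GN_apply, GN_apply, univ_inter, inter_eq_right.2 fun x hx => hx.2.trans ht1]

theorem measurePreserving_TN_GN {N : ℕ} (hN : 1 ≤ N) :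
    MeasurePreserving (TN N) (GN N) (GN N) :=
  ⟨measurable_TN N, Measure.ext_of_Iic _ _ fun t => by
    rw [Measure.map_apply (measurable_TN N) measurableSet_Iic, GN_TN_preimage_Iic_eq hN]⟩

theorem GN_invariant_general (N : ℕ) (hN : 1 ≤ N) (A : Set ℝ)
    (hA : MeasurableSet A) :
    GN N (TN N ⁻¹' A) = GN N A :=
  (measurePreserving_TN_GN hN).measure_preimage hA.nullMeasurableSet

/-- The probability measure `G_N` is `T_N`-invariant: for every Borel set `A ⊆ I`,
`G_N(T_N⁻¹(A)) = G_N(A)`. -/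
theorem GN_invariant (N : ℕ) (hN : 1 ≤ N) (A : Set ℝ)
    (hA : MeasurableSet A) (hAI : A ⊆ Icc (0:ℝ) 1) :
    GN N (TN N ⁻¹' A) = GN N A :=
  GN_invariant_general N hN A hA
end

section
/- For every irrational x ∈ (0,1) and every n ≥ 1, the convergents satisfy |x − p_n(x)/q_n(x)| < N^n/q_n(x)² ≤ 1/N^n. -/
/-!
Writing `tₖ = T_N^k(x)`, the definition of `T_N` gives `N = tₖ (aₖ₊₁ + tₖ₊₁)`, and unwinding this
`n` times gives `x = (pₙ + pₙ₋₁ tₙ) / (qₙ + qₙ₋₁ tₙ)`. Together with the determinant identity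
`pₙ qₙ₋₁ - pₙ₋₁ qₙ = -(-N)ⁿ` this yields the exact error `|x - pₙ/qₙ| = Nⁿ tₙ / (qₙ (qₙ + qₙ₋₁ tₙ))`,
which is `< Nⁿ/qₙ²` because `0 < tₙ < 1`. Finally all digits are `≥ N`, so `qₙ ≥ Nⁿ`.
-/

open MeasureTheory Set Filter
open scoped Classical Topology ENNReal

/-- `digit N x k` is the (k+1)-st N-continued fraction digit `a_{k+1}(x) = ⌊N / T_N^k(x)⌋`. -/
noncomputable def digit (N : ℕ) (x : ℝ) (k : ℕ) : ℕ := ⌊(N : ℝ) / (TN N)^[k] x⌋₊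

/-- Numerators: `pA N a (m+1) = p_m`, where `p_{-1}=1`, `p_0=0`, `p_k = a_k p_{k-1} + N p_{k-2}`
and `a k` denotes the digit `a_{k+1}`. -/
noncomputable def pA (N : ℕ) (a : ℕ → ℕ) : ℕ → ℝ
  | 0 => 1
  | 1 => 0
  | (k+2) => (a k : ℝ) * pA N a (k+1) + (N : ℝ) * pA N a k

/-- Denominators: `qA N a (m+1) = q_m`, where `q_{-1}=0`, `q_0=1`, `q_k = a_k q_{k-1} + N q_{k-2}`
and `a k` denotes the digit `a_{k+1}`. -/
noncomputable def qA (N : ℕ) (a : ℕ → ℕ) : ℕ → ℝ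
  | 0 => 0
  | 1 => 1
  | (k+2) => (a k : ℝ) * qA N a (k+1) + (N : ℝ) * qA N a k

section Recurrence

variable {N : ℕ} {a : ℕ → ℕ}

lemma qA_nonneg : ∀ n, 0 ≤ qA N a n
  | 0 => by simp [qA]
  | 1 => by simp [qA]
  | n + 2 => by
    have := qA_nonneg n
    have := qA_nonneg (n + 1)
    rw [qA]
    positivity

lemma pow_le_qA_succ (ha : ∀ k, N ≤ a k) (n : ℕ) : (N : ℝ) ^ n ≤ qA N a (n + 1) := by
  induction n with
  | zero => simp [qA]
  | succ n ih =>
    have hNa : (N : ℝ) ≤ a n := by exact_mod_cast ha n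
    have : 0 ≤ qA N a n := qA_nonneg n
    calc (N : ℝ) ^ (n + 1) = N * N ^ n := by ring
      _ ≤ a n * qA N a (n + 1) := by gcongr
      _ ≤ a n * qA N a (n + 1) + N * qA N a n := le_add_of_nonneg_right (by positivity)

lemma pA_mul_qA_sub_pA_mul_qA (n : ℕ) :
    pA N a (n + 1) * qA N a n - pA N a n * qA N a (n + 1) = -(-(N : ℝ)) ^ n := by
  induction n with
  | zero => simp [pA, qA]
  | succ n ih =>
    rw [pA, qA, pow_succ]
    linear_combination (-(N : ℝ)) * ih

lemma mul_qA_add_eq_pA_add {t : ℕ → ℝ} (ht : ∀ k, (N : ℝ) = t k * (a k + t (k + 1))) (n : ℕ) :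
    t 0 * (qA N a (n + 1) + qA N a n * t n) = pA N a (n + 1) + pA N a n * t n := by
  induction n with
  | zero => simp [pA, qA]
  | succ n ih =>
    rw [pA, qA]
    linear_combination (a n + t (n + 1)) * ih + (t 0 * qA N a n - pA N a n) * ht n

lemma sub_pA_div_qA {t : ℕ → ℝ} (ht : ∀ k, (N : ℝ) = t k * (a k + t (k + 1))) (n : ℕ)
    (hq : qA N a (n + 1) ≠ 0) (hden : qA N a (n + 1) + qA N a n * t n ≠ 0) :
    t 0 - pA N a (n + 1) / qA N a (n + 1)
      = (-(N : ℝ)) ^ n * t n / (qA N a (n + 1) * (qA N a (n + 1) + qA N a n * t n)) := by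
  have hx := mul_qA_add_eq_pA_add ht n
  have hdet := pA_mul_qA_sub_pA_mul_qA (N := N) (a := a) n
  rw [sub_div' hq, div_eq_div_iff hq (mul_ne_zero hq hden)]
  linear_combination qA N a (n + 1) ^ 2 * hx - qA N a (n + 1) * t n * hdet

end Recurrence

section Dynamics

variable {N : ℕ}

lemma mapsTo_TN (hN : N ≠ 0) :
    MapsTo (TN N) {y : ℝ | y ∈ Ioo 0 1 ∧ Irrational y} {y : ℝ | y ∈ Ioo 0 1 ∧ Irrational y} := by
  rintro y ⟨-, hy⟩
  have hNy : Irrational (N / y) := hy.natCast_div hN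
  exact ⟨⟨Int.fract_pos.2 (hNy.ne_int _), Int.fract_lt_one _⟩, hNy.sub_intCast _⟩

lemma natCast_eq_mul_floor_add_TN {y : ℝ} (hy : 0 < y) :
    (N : ℝ) = y * (⌊(N : ℝ) / y⌋₊ + TN N y) := by
  rw [TN, natCast_floor_eq_intCast_floor (by positivity)]
  field_simp
  ring

lemma le_floor_natCast_div {y : ℝ} (hy : y ∈ Ioc 0 1) : N ≤ ⌊(N : ℝ) / y⌋₊ :=
  Nat.le_floor <| (le_div_iff₀ hy.1).2 <| mul_le_of_le_one_right (Nat.cast_nonneg N) hy.2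

end Dynamics

theorem convergents_error_general (N : ℕ) (hN : 1 ≤ N) (x : ℝ) (hx : x ∈ Ioo (0:ℝ) 1)
    (hxi : Irrational x) (n : ℕ) :
    |x - pA N (digit N x) (n+1) / qA N (digit N x) (n+1)|
        < (N : ℝ) ^ n / (qA N (digit N x) (n+1)) ^ 2 ∧
      (N : ℝ) ^ n / (qA N (digit N x) (n+1)) ^ 2 ≤ 1 / (N : ℝ) ^ n := by
  have horbit (k : ℕ) : (TN N)^[k] x ∈ Ioo 0 1 :=
    ((mapsTo_TN (by omega)).iterate k ⟨hx, hxi⟩).1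
  have ht (k : ℕ) : (N : ℝ) = (TN N)^[k] x * (digit N x k + (TN N)^[k + 1] x) := by
    rw [Function.iterate_succ_apply']
    exact natCast_eq_mul_floor_add_TN (horbit k).1
  set q := qA N (digit N x) (n + 1)
  set q' := qA N (digit N x) n
  set y := (TN N)^[n] x
  have hy : y ∈ Ioo 0 1 := horbit n
  have hNn : (0 : ℝ) < N ^ n := by positivity
  have hqN : (N : ℝ) ^ n ≤ q :=
    pow_le_qA_succ (fun k ↦ le_floor_natCast_div (Ioo_subset_Ioc_self (horbit k))) n
  have hq : 0 < q := hNn.trans_le hqN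
  have hq'y : 0 ≤ q' * y := mul_nonneg (qA_nonneg n) hy.1.le
  have herr : x - pA N (digit N x) (n + 1) / q = (-(N : ℝ)) ^ n * y / (q * (q + q' * y)) :=
    sub_pA_div_qA ht n hq.ne' (by positivity)
  refine ⟨?_, ?_⟩
  · rw [herr, abs_div, abs_mul, abs_pow, abs_neg, Nat.abs_cast, abs_of_pos hy.1,
      abs_of_pos (by positivity)]
    calc (N : ℝ) ^ n * y / (q * (q + q' * y)) < N ^ n / (q * (q + q' * y)) := by
          gcongr; exact mul_lt_of_lt_one_right hNn hy.2
      _ ≤ N ^ n / q ^ 2 := by rw [sq]; gcongr; linarith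
  · rw [div_le_div_iff₀ (by positivity) hNn, one_mul, sq]
    exact mul_self_le_mul_self hNn.le hqN

/-- For every irrational `x ∈ (0,1)` and every `n ≥ 1`,
`|x − p_n(x)/q_n(x)| < N^n/q_n(x)² ≤ 1/N^n`. -/
theorem convergents_error (N : ℕ) (hN : 1 ≤ N) (x : ℝ) (hx : x ∈ Ioo (0:ℝ) 1)
    (hxi : Irrational x) (n : ℕ) (hn : 1 ≤ n) :
    |x - pA N (digit N x) (n+1) / qA N (digit N x) (n+1)|
        < (N : ℝ) ^ n / (qA N (digit N x) (n+1)) ^ 2 ∧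
      (N : ℝ) ^ n / (qA N (digit N x) (n+1)) ^ 2 ≤ 1 / (N : ℝ) ^ n :=
  convergents_error_general N hN x hx hxi n
end

section
/- For every integer i ≥ N, the fundamental interval of rank one satisfies I_N(i) = (N/(i+1), N/i) ∖ ℚ, so λ(a_1 = i) = N/(i(i+1)); moreover, for every n ≥ 1, all integers i_1,…,i_n ≥ N and every integer i ≥ N, λ({x ∈ I_N(i_1,…,i_n) : a_{n+1}(x) = i}) = V_{N,i}(s_n)·λ(I_N(i_1,…,i_n)), where V_{N,i}(s) = (s+N)/((s+i)(s+i+1)) and s_n = [i_n, i_{n−1}, …, i_1]_N. -/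
open MeasureTheory Set Filter
open scoped Classical Topology ENNReal

/-- Value of the finite N-continued fraction `[ℓ 0, …, ℓ (d-1)]_N = N/(ℓ 0 + N/(ℓ 1 + ⋯ + N/ℓ (d-1)))`. -/
noncomputable def cfVal (N : ℕ) : (ℕ → ℕ) → ℕ → ℝ
  | _, 0 => 0
  | ℓ, (d+1) => (N : ℝ) / ((ℓ 0 : ℝ) + cfVal N (fun k => ℓ (k+1)) d)

/-- The fundamental interval `I_N(i 0, …, i (n-1))` of rank `n`:
irrational `x ∈ (0,1)` whose first `n` digits are `i 0, …, i (n-1)`. -/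
def fund (N n : ℕ) (i : ℕ → ℕ) : Set ℝ :=
  {x ∈ Ioo (0:ℝ) 1 | Irrational x ∧ ∀ k < n, digit N x k = i k}

/-!
The inverse branches of `T_N` are the maps `y ↦ N / (a + y)`, so `I_N(i_1, …, i_n)` is the image
of the irrationals of `(0, 1)` under `t ↦ [i_1, …, i_n + t]_N`. This is the Möbius map
`t ↦ (p_n + t p_{n-1}) / (q_n + t q_{n-1})` of determinant `±N^n`, whence
`λ(I_N(i_1, …, i_n)) = N^n / (q_n (q_n + q_{n-1}))`. Comparing this at ranks `n` and `n + 1`, with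
`q_{n+1} = i q_n + N q_{n-1}` and `s_n = N q_{n-1} / q_n`, gives the conditional probability.
-/

namespace NCF

variable {N : ℕ}

/-- `cfWithTail N i n t = N/(i 0 + N/(i 1 + ⋯ + N/(i (n-1) + t)))`. -/
noncomputable def cfWithTail (N : ℕ) : (ℕ → ℕ) → ℕ → ℝ → ℝ
  | _, 0, t => t
  | i, n + 1, t => N / (i 0 + cfWithTail N (fun k => i (k + 1)) n t)

/-- Continuants, shifted by one: `cfNum N i (n + 1) / cfDen N i (n + 1) = [i 0, …, i (n-1)]_N`,
and index `0` holds `p₋₁ = 1`, `q₋₁ = 0`. -/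
def cfNum (N : ℕ) (i : ℕ → ℕ) : ℕ → ℕ
  | 0 => 1
  | 1 => 0
  | n + 2 => i n * cfNum N i (n + 1) + N * cfNum N i n

def cfDen (N : ℕ) (i : ℕ → ℕ) : ℕ → ℕ
  | 0 => 0
  | 1 => 1
  | n + 2 => i n * cfDen N i (n + 1) + N * cfDen N i n

lemma cfWithTail_succ' (i : ℕ → ℕ) (n : ℕ) (t : ℝ) :
    cfWithTail N i (n + 1) t = cfWithTail N i n (N / (i n + t)) := by
  induction n generalizing i with
  | zero => rfl
  | succ n ih => rw [cfWithTail, ih, ← cfWithTail]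

lemma cfWithTail_nonneg (i : ℕ → ℕ) (n : ℕ) {t : ℝ} (ht : 0 ≤ t) : 0 ≤ cfWithTail N i n t := by
  induction n generalizing i with
  | zero => exact ht
  | succ n ih => have := ih (fun k => i (k + 1)); rw [cfWithTail]; positivity

lemma cfDen_pos {i : ℕ → ℕ} {n : ℕ} (hi : ∀ k < n, 0 < i k) : 0 < cfDen N i (n + 1) := by
  induction n with
  | zero => exact Nat.one_pos
  | succ n ih =>
    rw [cfDen]
    have := Nat.mul_pos (hi n n.lt_succ_self) (ih fun k hk => hi k (by omega))
    omega

lemma cfDen_congr {i i' : ℕ → ℕ} {n : ℕ} (h : ∀ k < n, i k = i' k) :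
    cfDen N i (n + 1) = cfDen N i' (n + 1) ∧ cfDen N i n = cfDen N i' n := by
  induction n with
  | zero => exact ⟨rfl, rfl⟩
  | succ n ih =>
    obtain ⟨h₁, h₀⟩ := ih fun k hk => h k (by omega)
    exact ⟨by rw [cfDen, cfDen, h₁, h₀, h n n.lt_succ_self], h₁⟩

lemma cfNum_mul_cfDen_sub (i : ℕ → ℕ) (n : ℕ) :
    (cfNum N i n * cfDen N i (n + 1) - cfNum N i (n + 1) * cfDen N i n : ℝ) = (-N) ^ n := by
  induction n with
  | zero => simp [cfNum, cfDen]
  | succ n ih =>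
    simp only [cfNum, cfDen, Nat.cast_add, Nat.cast_mul]
    linear_combination (-(N : ℝ)) * ih

lemma cfWithTail_eq_div {i : ℕ → ℕ} {n : ℕ} (hi : ∀ k < n, 0 < i k) {t : ℝ} (ht : 0 ≤ t) :
    cfWithTail N i n t
      = (cfNum N i (n + 1) + t * cfNum N i n) / (cfDen N i (n + 1) + t * cfDen N i n) := by
  induction n generalizing t with
  | zero => simp [cfWithTail, cfNum, cfDen]
  | succ n ih =>
    have hin : (0 : ℝ) < i n := by exact_mod_cast hi n n.lt_succ_self
    have hq : (0 : ℝ) < cfDen N i (n + 1) := by exact_mod_cast cfDen_pos fun k hk => hi k (by omega)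
    have hw : 0 < (i n + t : ℝ) := by positivity
    rw [cfWithTail_succ', ih (fun k hk => hi k (by omega)) (by positivity)]
    simp only [cfNum, cfDen, Nat.cast_add, Nat.cast_mul]
    field_simp
    ring

lemma mobius_sub_mobius {a b c d u v : ℝ} (hu : c + u * d ≠ 0) (hv : c + v * d ≠ 0) :
    (a + u * b) / (c + u * d) - (a + v * b) / (c + v * d)
      = (u - v) * (b * c - a * d) / ((c + u * d) * (c + v * d)) := by
  rw [div_sub_div _ _ hu hv]
  ring

lemma abs_cfWithTail_sub {i : ℕ → ℕ} {n : ℕ} (hi : ∀ k < n, 0 < i k) {u v : ℝ}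
    (hu : 0 ≤ u) (hv : 0 ≤ v) :
    |cfWithTail N i n u - cfWithTail N i n v| = |u - v| * N ^ n /
      ((cfDen N i (n + 1) + u * cfDen N i n) * (cfDen N i (n + 1) + v * cfDen N i n)) := by
  have hq : (0 : ℝ) < cfDen N i (n + 1) := by exact_mod_cast cfDen_pos hi
  have hu' : (0 : ℝ) < cfDen N i (n + 1) + u * cfDen N i n := by positivity
  have hv' : (0 : ℝ) < cfDen N i (n + 1) + v * cfDen N i n := by positivity
  rw [cfWithTail_eq_div hi hu, cfWithTail_eq_div hi hv, mobius_sub_mobius hu'.ne' hv'.ne',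
    cfNum_mul_cfDen_sub, abs_div, abs_of_pos (mul_pos hu' hv'), abs_mul, abs_pow, abs_neg,
    Nat.abs_cast]

lemma cfVal_nonneg (ℓ : ℕ → ℕ) (d : ℕ) : 0 ≤ cfVal N ℓ d := by
  induction d generalizing ℓ with
  | zero => exact le_rfl
  | succ d ih => have := ih (fun k => ℓ (k + 1)); rw [cfVal]; positivity

lemma cfVal_reverse_mul_cfDen {i : ℕ → ℕ} {n : ℕ} (hi : ∀ k < n, 0 < i k) :
    cfVal N (fun k => i (n - 1 - k)) n * cfDen N i (n + 1) = N * cfDen N i n := by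
  induction n with
  | zero => simp [cfVal, cfDen]
  | succ n ih =>
    have hs := cfVal_nonneg (N := N) (fun k => i (n - 1 - k)) n
    have hin : (0 : ℝ) < i n := by exact_mod_cast hi n n.lt_succ_self
    have hrev : cfVal N (fun k => i (n + 1 - 1 - k)) (n + 1)
        = N / (i n + cfVal N (fun k => i (n - 1 - k)) n) := by
      rw [cfVal]
      congr 3
      funext k
      congr 1
      omega
    rw [hrev, cfDen, Nat.cast_add, Nat.cast_mul, Nat.cast_mul, ← ih fun k hk => hi k (by omega)]
    field_simp

lemma digit_zero (x : ℝ) : digit N x 0 = ⌊(N : ℝ) / x⌋₊ := rfl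

lemma digit_succ (x : ℝ) (k : ℕ) : digit N x (k + 1) = digit N (TN N x) k := by
  rw [digit, digit, Function.iterate_succ_apply]

lemma TN_eq_fract (x : ℝ) : TN N x = Int.fract ((N : ℝ) / x) := rfl

lemma TN_natCast_div_add (hN : N ≠ 0) (a : ℕ) {y : ℝ} (hy₀ : 0 ≤ y) (hy₁ : y < 1) :
    TN N (N / (a + y)) = y := by
  rw [TN_eq_fract, div_div_cancel₀ (Nat.cast_ne_zero.2 hN), Int.fract_natCast_add,
    Int.fract_eq_self.2 ⟨hy₀, hy₁⟩]

lemma digit_zero_natCast_div_add (hN : N ≠ 0) (a : ℕ) {y : ℝ} (hy₀ : 0 ≤ y) (hy₁ : y < 1) :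
    digit N (N / (a + y)) 0 = a := by
  rw [digit_zero, div_div_cancel₀ (Nat.cast_ne_zero.2 hN), add_comm, Nat.floor_add_natCast hy₀,
    Nat.floor_eq_zero.2 hy₁, zero_add]

lemma natCast_div_digit_add_TN (hN : N ≠ 0) {x : ℝ} (hx : 0 < x) :
    (N : ℝ) / (digit N x 0 + TN N x) = x := by
  rw [digit_zero, TN_eq_fract, natCast_floor_eq_intCast_floor (by positivity),
    Int.floor_add_fract, div_div_cancel₀ (Nat.cast_ne_zero.2 hN)]

lemma irrational_TN (hN : N ≠ 0) {x : ℝ} (hx : Irrational x) : Irrational (TN N x) :=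
  ((irrational_natCast_div_iff.2 ⟨hN, hx⟩).sub_intCast _)

/-- `y ↦ N / (i 0 + y)` inverts `T_N` on the points whose first digit is `i 0`. -/
lemma fund_succ (hN : N ≠ 0) (n : ℕ) {i : ℕ → ℕ} (hi : N ≤ i 0) :
    fund N (n + 1) i = (fun y : ℝ => N / (i 0 + y)) '' fund N n (fun k => i (k + 1)) := by
  ext x
  simp only [fund, mem_ofPred_eq, mem_image, mem_Ioo, Nat.forall_lt_succ_left, digit_succ]
  constructor
  · rintro ⟨⟨hx₀, hx₁⟩, hx, hd₀, hd⟩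
    have hy := irrational_TN hN hx
    refine ⟨TN N x, ⟨⟨(Int.fract_nonneg _).lt_of_ne' hy.ne_zero, Int.fract_lt_one _⟩, hy, hd⟩, ?_⟩
    rw [← hd₀, natCast_div_digit_add_TN hN hx₀]
  · rintro ⟨y, ⟨⟨hy₀, hy₁⟩, hy, hd⟩, rfl⟩
    have hNa : (N : ℝ) ≤ i 0 := by exact_mod_cast hi
    have hN₀ : (0 : ℝ) < N := by exact_mod_cast Nat.pos_of_ne_zero hN
    refine ⟨⟨by positivity, (div_lt_one (by positivity)).2 (by linarith)⟩,
      irrational_natCast_div_iff.2 ⟨hN, irrational_natCast_add_iff.2 hy⟩,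
      digit_zero_natCast_div_add hN _ hy₀.le hy₁, ?_⟩
    rwa [TN_natCast_div_add hN _ hy₀.le hy₁]

lemma preimage_natCast_div_add_range_ratCast (hN : N ≠ 0) (a : ℕ) :
    (fun y : ℝ => N / (a + y)) ⁻¹' range ((↑) : ℚ → ℝ) = range ((↑) : ℚ → ℝ) := by
  ext y
  exact not_iff_not.1 ((irrational_natCast_div_iff.trans (and_iff_right hN)).trans
    irrational_natCast_add_iff)

lemma image_const_div_Ioo_of_pos {c p q : ℝ} (hc : 0 < c) (hp : 0 < p) (hq : 0 < q) :
    (c / ·) '' Ioo p q = Ioo (c / q) (c / p) := by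
  ext x
  constructor
  · rintro ⟨y, ⟨hpy, hyq⟩, rfl⟩
    exact ⟨div_lt_div_of_pos_left hc (hp.trans hpy) hyq, div_lt_div_of_pos_left hc hp hpy⟩
  · rintro ⟨h₁, h₂⟩
    have hx : 0 < x := (div_pos hc hq).trans h₁
    exact ⟨c / x, ⟨(lt_div_comm₀ hp hx).2 h₂, (div_lt_comm₀ hx hq).2 h₁⟩, div_div_cancel₀ hc.ne'⟩

lemma image_const_div_add_Ioo {c a m M : ℝ} (hc : 0 < c) (hm : 0 < a + m) (hM : 0 < a + M) :
    (fun y => c / (a + y)) '' Ioo m M = Ioo (c / (a + M)) (c / (a + m)) := by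
  rw [show (fun y => c / (a + y)) = (c / ·) ∘ (a + ·) from rfl, image_comp, image_const_add_Ioo,
    image_const_div_Ioo_of_pos hc hm hM]

lemma image_natCast_div_add_uIoo_diff (hN : N ≠ 0) {a : ℕ} (ha : 0 < a) {m M : ℝ}
    (hm : 0 ≤ m) (hM : 0 ≤ M) :
    (fun y : ℝ => N / (a + y)) '' (uIoo m M \ range ((↑) : ℚ → ℝ))
      = uIoo (N / (a + m)) (N / (a + M)) \ range ((↑) : ℚ → ℝ) := by
  have hN₀ : (0 : ℝ) < N := by exact_mod_cast Nat.pos_of_ne_zero hN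
  have ha₀ : (0 : ℝ) < a := by exact_mod_cast ha
  conv_lhs => rw [← preimage_natCast_div_add_range_ratCast hN a]
  rw [image_sdiff_preimage]
  congr 1
  rcases le_total m M with h | h
  · rw [uIoo_of_le h, uIoo_of_ge (by gcongr), image_const_div_add_Ioo hN₀ (by positivity)
      (by positivity)]
  · rw [uIoo_of_ge h, uIoo_of_le (by gcongr), image_const_div_add_Ioo hN₀ (by positivity)
      (by positivity)]

lemma fund_eq_uIoo_diff (hN : N ≠ 0) {n : ℕ} {i : ℕ → ℕ} (hi : ∀ k < n, N ≤ i k) :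
    fund N n i = uIoo (cfWithTail N i n 0) (cfWithTail N i n 1) \ range ((↑) : ℚ → ℝ) := by
  induction n generalizing i with
  | zero =>
    ext x
    simp [fund, cfWithTail, Irrational]
  | succ n ih =>
    rw [fund_succ hN n (hi 0 n.succ_pos), ih fun k hk => hi (k + 1) (by omega),
      image_natCast_div_add_uIoo_diff hN ((Nat.pos_of_ne_zero hN).trans_le (hi 0 n.succ_pos))
        (cfWithTail_nonneg _ _ le_rfl) (cfWithTail_nonneg _ _ zero_le_one)]
    rfl

lemma volume_fund (hN : N ≠ 0) {n : ℕ} {i : ℕ → ℕ} (hi : ∀ k < n, N ≤ i k) :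
    (volume (fund N n i)).toReal
      = N ^ n / (cfDen N i (n + 1) * (cfDen N i (n + 1) + cfDen N i n)) := by
  have hpos : ∀ k < n, 0 < i k := fun k hk => (Nat.pos_of_ne_zero hN).trans_le (hi k hk)
  rw [fund_eq_uIoo_diff hN hi, measure_sdiff_null ((countable_range _).measure_zero _),
    Real.volume_uIoo, ENNReal.toReal_ofReal (abs_nonneg _),
    abs_cfWithTail_sub hpos zero_le_one le_rfl]
  simp only [sub_zero, abs_one, one_mul, zero_mul, add_zero]
  ring

lemma setOf_mem_fund_digit_eq (n : ℕ) (i : ℕ → ℕ) (j : ℕ) :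
    {x ∈ fund N n i | digit N x n = j} = fund N (n + 1) (Function.update i n j) := by
  have hupd : ∀ x, (∀ k < n, digit N x k = Function.update i n j k) ↔ ∀ k < n, digit N x k = i k :=
    fun x => forall₂_congr fun k hk => by rw [Function.update_of_ne (Nat.ne_of_lt hk)]
  ext x
  simp only [fund, mem_ofPred_eq, Nat.forall_lt_succ_right, Function.update_self, hupd, and_assoc]

lemma cfDen_update (i : ℕ → ℕ) (n j : ℕ) :
    cfDen N (Function.update i n j) (n + 2) = j * cfDen N i (n + 1) + N * cfDen N i n ∧
      cfDen N (Function.update i n j) (n + 1) = cfDen N i (n + 1) := by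
  obtain ⟨h₁, h₀⟩ := cfDen_congr (N := N) fun k hk => Function.update_of_ne (Nat.ne_of_lt hk) j i
  exact ⟨by rw [cfDen, Function.update_self, h₁, h₀], h₁⟩

lemma volume_ratio_identity {N q q' s j : ℝ} (n : ℕ) (hN : 0 < N) (hq : 0 < q) (hq' : 0 ≤ q')
    (hj : 0 < j) (hs : s * q = N * q') :
    N ^ (n + 1) / ((j * q + N * q') * (j * q + N * q' + q))
      = (s + N) / ((s + j) * (s + j + 1)) * (N ^ n / (q * (q + q'))) := by
  obtain rfl : s = N * q' / q := by rw [eq_div_iff hq.ne', hs]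
  field_simp
  ring

end NCF

open NCF in
/-- Rank-one fundamental intervals and conditional digit probabilities:
`I_N(i) = (N/(i+1), N/i) ∖ ℚ`, hence `λ(a_1 = i) = N/(i(i+1))`; and for digits
`i_1,…,i_n ≥ N` and `i ≥ N`,
`λ({x ∈ I_N(i_1,…,i_n) : a_{n+1}(x) = i}) = V_{N,i}(s_n) λ(I_N(i_1,…,i_n))`
with `V_{N,i}(s) = (s+N)/((s+i)(s+i+1))` and `s_n = [i_n,…,i_1]_N`. -/
theorem digit_probabilities (N : ℕ) (hN : 1 ≤ N) :
    (∀ i : ℕ, N ≤ i →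
      fund N 1 (fun _ => i) = Ioo ((N : ℝ)/(i+1)) ((N : ℝ)/i) \ (Set.range ((↑) : ℚ → ℝ)) ∧
      (volume (fund N 1 (fun _ => i))).toReal = (N : ℝ) / (i * (i+1))) ∧
    ∀ n : ℕ, 1 ≤ n → ∀ i : ℕ → ℕ, (∀ k < n, N ≤ i k) → ∀ j : ℕ, N ≤ j →
      (volume {x ∈ fund N n i | digit N x n = j}).toReal =
        (cfVal N (fun k => i (n - 1 - k)) n + N)
          / ((cfVal N (fun k => i (n - 1 - k)) n + j) * (cfVal N (fun k => i (n - 1 - k)) n + j + 1))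
          * (volume (fund N n i)).toReal := by
  have hN₀ : N ≠ 0 := by omega
  have hNR : (1 : ℝ) ≤ N := by exact_mod_cast hN
  refine ⟨fun i hi => ?_, fun n _ i hi j hj => ?_⟩
  · have hiR : (N : ℝ) ≤ i := by exact_mod_cast hi
    have hrank1 :
        fund N 1 (fun _ => i) = Ioo ((N : ℝ) / (i + 1)) (N / i) \ range ((↑) : ℚ → ℝ) := by
      rw [fund_eq_uIoo_diff hN₀ fun _ _ => hi, uIoo_of_ge]
      · simp [cfWithTail]
      · simp only [cfWithTail]
        gcongr <;> linarith
    refine ⟨hrank1, ?_⟩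
    rw [volume_fund hN₀ fun _ _ => hi]
    simp [cfDen]
  · have hupd : ∀ k < n + 1, N ≤ Function.update i n j k := Nat.forall_lt_succ_right.2
      ⟨fun k hk => by rw [Function.update_of_ne (Nat.ne_of_lt hk)]; exact hi k hk,
        by rwa [Function.update_self]⟩
    have hpos : ∀ k < n, 0 < i k := fun k hk => hN.trans (hi k hk)
    obtain ⟨hden₂, hden₁⟩ := cfDen_update (N := N) i n j
    rw [setOf_mem_fund_digit_eq, volume_fund hN₀ hupd, volume_fund hN₀ hi, hden₂, hden₁]
    push_cast
    exact volume_ratio_identity n (by linarith) (by exact_mod_cast cfDen_pos hpos) (by positivity)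
      (by exact_mod_cast (hN.trans hj)) (cfVal_reverse_mul_cfDen hpos)
end

section
/- The extended measure Ḡ_N is preserved by the natural extension map T̄_N: for every Borel set B ⊆ I², Ḡ_N(T̄_N^{-1}(B)) = Ḡ_N(B). -/
open MeasureTheory Set Filter
open scoped Classical Topology ENNReal

/-- The natural extension map `T̄_N(x,y) = (T_N(x), N/(a_1(x)+y))` on `I²`
(defined as `(0,y)` for rational `x`, a set of measure zero). -/
noncomputable def TNbar (N : ℕ) (p : ℝ × ℝ) : ℝ × ℝ :=
  if Irrational p.1 then (TN N p.1, (N : ℝ) / ((⌊(N:ℝ)/p.1⌋₊ : ℝ) + p.2)) else (0, p.2)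

/-- The extended measure `Ḡ_N(B) = (1/log((N+1)/N)) ∬_B N dx dy/(xy+N)²` on `I²`. -/
noncomputable def GNbar (N : ℕ) : Measure (ℝ × ℝ) :=
  (volume.restrict (Icc (0:ℝ) 1 ×ˢ Icc (0:ℝ) 1)).withDensity
    (fun p => ENNReal.ofReal ((Real.log ((N+1)/N))⁻¹ * N / (p.1 * p.2 + N) ^ 2))

/-!
For `a ≥ N`, off the null set of rational `x`, `T̄_N` maps the rectangle `{⌊N/x⌋ = a} × (0,1)`
by the branch `(x, y) ↦ (N/x - a, N/(a + y))` bijectively onto `(0,1) × {⌊N/y⌋ = a}`, and both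
families of rectangles tile the unit square up to null sets. So it suffices that each branch
carries the density `N/(xy + N)²` on its rectangle to the same density on the image. The branch
multiplies `xy + N` by `λ = N/(x(a + y))` while its Jacobian is exactly `λ²`, so this is the
change of variables formula.
-/

open Function

theorem MeasureTheory.measure_eq_tsum_measure_inter {α ι : Type*} [MeasurableSpace α]
    [Countable ι] {μ : Measure α} {s : ι → Set α} (hs : ∀ i, MeasurableSet (s i))
    (hd : Pairwise (Disjoint on s)) (hcover : μ (⋃ i, s i)ᶜ = 0) (t : Set α) :
    μ t = ∑' i, μ (t ∩ s i) := by
  have hμ : μ.restrict (⋃ i, s i) = μ :=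
    Measure.restrict_eq_self_of_ae_mem (mem_ae_iff.2 hcover)
  calc μ t = μ.restrict (⋃ i, s i) t := by rw [hμ]
    _ = ∑' i, μ (t ∩ s i) := by
      rw [Measure.restrict_iUnion hd hs, Measure.sum_apply_of_countable]
      simp only [Measure.restrict_apply' (hs _)]

theorem ae_irrational_fst : ∀ᵐ p : ℝ × ℝ, Irrational p.1 := by
  have h : ∀ᵐ x : ℝ, Irrational x := by
    simp only [ae_iff, Irrational, not_not, ofPred_mem_eq]
    exact (countable_range _).measure_zero volume
  rw [Measure.volume_eq_prod]
  exact Measure.quasiMeasurePreserving_fst.ae h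

namespace NContinuedFraction

noncomputable def GNdensity (N : ℕ) (p : ℝ × ℝ) : ℝ≥0∞ :=
  ENNReal.ofReal ((Real.log ((N+1)/N))⁻¹ * N / (p.1 * p.2 + N) ^ 2)

/-- Up to its endpoints, the set of `x` with first digit `⌊N/x⌋ = a`. -/
def digitInterval (N a : ℕ) : Set ℝ := Ioo ((N : ℝ) / (a + 1)) (N / a)

def cylinder (N a : ℕ) : Set (ℝ × ℝ) := digitInterval N a ×ˢ Ioo 0 1

def imageCylinder (N a : ℕ) : Set (ℝ × ℝ) := Ioo 0 1 ×ˢ digitInterval N a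

noncomputable def branch (N a : ℕ) (p : ℝ × ℝ) : ℝ × ℝ := ((N : ℝ) / p.1 - a, N / (a + p.2))

noncomputable def branchInv (N a : ℕ) (q : ℝ × ℝ) : ℝ × ℝ := ((N : ℝ) / (a + q.1), N / q.2 - a)

variable {N a : ℕ}

theorem mem_digitInterval_iff (ha : 0 < a) {x : ℝ} :
    x ∈ digitInterval N a ↔ 0 < x ∧ (N : ℝ) / x - a ∈ Ioo 0 1 := by
  have ha' : (0 : ℝ) < a := Nat.cast_pos.2 ha
  simp only [digitInterval, mem_Ioo, sub_pos, sub_lt_iff_lt_add']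
  constructor
  · rintro ⟨h1, h2⟩
    have hx : 0 < x := (by positivity : (0 : ℝ) ≤ N / (a + 1)).trans_lt h1
    rw [div_lt_iff₀ (by positivity)] at h1
    rw [lt_div_iff₀ ha'] at h2
    rw [lt_div_iff₀ hx, div_lt_iff₀ hx]
    exact ⟨hx, by linarith, by linarith⟩
  · rintro ⟨hx, h1, h2⟩
    rw [lt_div_iff₀ hx] at h1
    rw [div_lt_iff₀ hx] at h2
    rw [div_lt_iff₀ (by positivity), lt_div_iff₀ ha']
    exact ⟨by linarith, by linarith⟩

theorem digitInterval_subset_Icc (ha : N ≤ a) : digitInterval N a ⊆ Icc 0 1 := fun _ hx =>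
  ⟨(by positivity : (0 : ℝ) ≤ N / (a + 1)).trans hx.1.le,
    hx.2.le.trans (div_le_one_of_le₀ (by exact_mod_cast ha) (Nat.cast_nonneg a))⟩

theorem pairwise_disjoint_digitInterval (N : ℕ) : Pairwise (Disjoint on digitInterval N) := by
  refine (pairwise_disjoint_on _).2 fun m n hmn => disjoint_left.2 fun x hm hn => ?_
  have : (N : ℝ) / n ≤ N / (m + 1) :=
    div_le_div_of_nonneg_left (Nat.cast_nonneg N) (by positivity) (by exact_mod_cast hmn)
  linarith [hm.1, hn.2]

theorem Icc_diff_iUnion_digitInterval_subset (hN : 0 < N) :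
    Icc 0 1 \ ⋃ n, digitInterval N (N + n) ⊆ insert 0 (range fun a : ℕ => (N : ℝ) / a) := by
  rintro x ⟨⟨hx0, hx1⟩, hx⟩
  by_contra hxK
  simp only [mem_insert_iff, mem_range, not_or, not_exists] at hxK
  obtain ⟨hx0', hxa⟩ := hxK
  have hxpos : 0 < x := lt_of_le_of_ne hx0 (Ne.symm hx0')
  set a := ⌊(N : ℝ) / x⌋₊
  have hNa : N ≤ a := Nat.le_floor ((le_div_iff₀ hxpos).2 (by nlinarith))
  have ha : 0 < a := hN.trans_le hNa
  refine hx (mem_iUnion.2 ⟨a - N, ?_⟩)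
  rw [Nat.add_sub_cancel' hNa, mem_digitInterval_iff ha]
  refine ⟨hxpos, sub_pos.2 (lt_of_le_of_ne (Nat.floor_le (by positivity)) fun h => hxa a ?_),
    sub_lt_iff_lt_add'.2 (Nat.lt_floor_add_one _)⟩
  rw [h, div_div_cancel₀ (Nat.cast_ne_zero.2 hN.ne')]

theorem iUnion_digitInterval_ae_eq (hN : 0 < N) :
    ⋃ n, digitInterval N (N + n) =ᵐ[volume] Icc (0 : ℝ) 1 := by
  refine ae_eq_set.2 ⟨?_, ?_⟩
  · rw [sdiff_eq_empty.2 (iUnion_subset fun n => digitInterval_subset_Icc (Nat.le_add_right N n)),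
      measure_empty]
  · exact measure_mono_null (Icc_diff_iUnion_digitInterval_subset hN)
      (((countable_range _).insert 0).measure_zero _)

theorem measurableSet_cylinder : MeasurableSet (cylinder N a) :=
  measurableSet_Ioo.prod measurableSet_Ioo

theorem measurableSet_imageCylinder : MeasurableSet (imageCylinder N a) :=
  measurableSet_Ioo.prod measurableSet_Ioo

theorem pairwise_disjoint_cylinder (N : ℕ) : Pairwise (Disjoint on cylinder N) :=
  fun _ _ h => (pairwise_disjoint_digitInterval N h).set_prod_left _ _

theorem pairwise_disjoint_imageCylinder (N : ℕ) : Pairwise (Disjoint on imageCylinder N) :=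
  fun _ _ h => (pairwise_disjoint_digitInterval N h).set_prod_right _ _

theorem cylinder_subset (ha : N ≤ a) : cylinder N a ⊆ Icc 0 1 ×ˢ Icc 0 1 :=
  prod_mono (digitInterval_subset_Icc ha) Ioo_subset_Icc_self

theorem imageCylinder_subset (ha : N ≤ a) : imageCylinder N a ⊆ Icc 0 1 ×ˢ Icc 0 1 :=
  prod_mono Ioo_subset_Icc_self (digitInterval_subset_Icc ha)

theorem iUnion_cylinder_ae_eq (hN : 0 < N) :
    ⋃ n, cylinder N (N + n) =ᵐ[volume] Icc (0 : ℝ) 1 ×ˢ Icc (0 : ℝ) 1 := by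
  simp only [cylinder, ← iUnion_prod_const]
  rw [Measure.volume_eq_prod]
  exact Measure.set_prod_ae_eq (iUnion_digitInterval_ae_eq hN) Ioo_ae_eq_Icc

theorem iUnion_imageCylinder_ae_eq (hN : 0 < N) :
    ⋃ n, imageCylinder N (N + n) =ᵐ[volume] Icc (0 : ℝ) 1 ×ˢ Icc (0 : ℝ) 1 := by
  simp only [imageCylinder, ← prod_iUnion]
  rw [Measure.volume_eq_prod]
  exact Measure.set_prod_ae_eq Ioo_ae_eq_Icc (iUnion_digitInterval_ae_eq hN)

theorem mapsTo_branch (hN : 0 < N) (ha : 0 < a) :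
    MapsTo (branch N a) (cylinder N a) (imageCylinder N a) := by
  rintro ⟨x, y⟩ ⟨hx, hy⟩
  have hay : (0 : ℝ) < a + y := by have := hy.1; positivity
  dsimp only [branch]
  refine ⟨((mem_digitInterval_iff ha).1 hx).2,
    (mem_digitInterval_iff ha).2 ⟨by positivity, ?_⟩⟩
  rwa [div_div_cancel₀ (Nat.cast_ne_zero.2 hN.ne'), add_sub_cancel_left]

theorem mapsTo_branchInv (hN : 0 < N) (ha : 0 < a) :
    MapsTo (branchInv N a) (imageCylinder N a) (cylinder N a) := by
  rintro ⟨u, v⟩ ⟨hu, hv⟩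
  have hau : (0 : ℝ) < a + u := by have := hu.1; positivity
  dsimp only [branchInv]
  refine ⟨(mem_digitInterval_iff ha).2 ⟨by positivity, ?_⟩,
    ((mem_digitInterval_iff ha).1 hv).2⟩
  rwa [div_div_cancel₀ (Nat.cast_ne_zero.2 hN.ne'), add_sub_cancel_left]

theorem invOn_branchInv_branch (hN : 0 < N) :
    InvOn (branchInv N a) (branch N a) (cylinder N a) (imageCylinder N a) := by
  have hN' : (N : ℝ) ≠ 0 := Nat.cast_ne_zero.2 hN.ne'
  constructor
  · rintro ⟨x, y⟩ -
    simp only [branch, branchInv, add_sub_cancel, div_div_cancel₀ hN', add_sub_cancel_left]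
  · rintro ⟨u, v⟩ -
    simp only [branch, branchInv, add_sub_cancel, div_div_cancel₀ hN', add_sub_cancel_left]

theorem bijOn_branch (hN : 0 < N) (ha : 0 < a) :
    BijOn (branch N a) (cylinder N a) (imageCylinder N a) :=
  (invOn_branchInv_branch hN).bijOn (mapsTo_branch hN ha) (mapsTo_branchInv hN ha)

theorem measurable_branch : Measurable (branch N a) := by
  unfold branch; fun_prop

theorem hasFDerivAt_branch {p : ℝ × ℝ} (hx : p.1 ≠ 0) (hy : (a : ℝ) + p.2 ≠ 0) :
    HasFDerivAt (branch N a)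
      (((1 : ℝ →L[ℝ] ℝ).smulRight (-(N : ℝ) / p.1 ^ 2)).prodMap
        ((1 : ℝ →L[ℝ] ℝ).smulRight (-(N : ℝ) / (a + p.2) ^ 2))) p := by
  have h₁ : HasDerivAt (fun x : ℝ => (N : ℝ) / x - a) (-(N : ℝ) / p.1 ^ 2) p.1 := by
    simpa [div_eq_mul_inv, neg_div] using
      ((hasDerivAt_inv hx).const_mul (N : ℝ)).sub_const (a : ℝ)
  have h₂ : HasDerivAt (fun y : ℝ => (N : ℝ) / (a + y)) (-(N : ℝ) / (a + p.2) ^ 2) p.2 := by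
    simpa [div_eq_mul_inv] using
      (((hasDerivAt_id p.2).const_add (a : ℝ)).fun_inv hy).const_mul (N : ℝ)
  exact h₁.hasFDerivAt.prodMap p h₂.hasFDerivAt

theorem det_fderiv_branch {p : ℝ × ℝ} (hx : p.1 ≠ 0) (hy : (a : ℝ) + p.2 ≠ 0) :
    (fderiv ℝ (branch N a) p).det = ((N : ℝ) / (p.1 * (a + p.2))) ^ 2 := by
  rw [(hasFDerivAt_branch hx hy).fderiv, ContinuousLinearMap.det, ContinuousLinearMap.coe_prodMap,
    LinearMap.det_prodMap]
  simp only [ContinuousLinearMap.coe_smulRight, ContinuousLinearMap.toLinearMap_one,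
    LinearMap.det_ring, LinearMap.coe_smulRight, Module.End.one_apply, smul_eq_mul, one_mul]
  field_simp

theorem branch_fst_mul_snd_add {p : ℝ × ℝ} (hx : p.1 ≠ 0) (hy : (a : ℝ) + p.2 ≠ 0) :
    (branch N a p).1 * (branch N a p).2 + N = N / (p.1 * (a + p.2)) * (p.1 * p.2 + N) := by
  simp only [branch]
  field_simp
  ring

theorem abs_det_fderiv_branch_mul_GNdensity {p : ℝ × ℝ} (hx : 0 < p.1) (hy : 0 < p.2) :
    ENNReal.ofReal |(fderiv ℝ (branch N a) p).det| * GNdensity N (branch N a p) =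
      GNdensity N p := by
  have hay : (0 : ℝ) < a + p.2 := by positivity
  rw [GNdensity, GNdensity, det_fderiv_branch hx.ne' hay.ne',
    branch_fst_mul_snd_add hx.ne' hay.ne', abs_of_nonneg (sq_nonneg _),
    ← ENNReal.ofReal_mul (sq_nonneg _)]
  congr 1
  field_simp

theorem setLIntegral_GNdensity_preimage_branch (hN : 0 < N) (ha : 0 < a) {B : Set (ℝ × ℝ)}
    (hB : MeasurableSet B) :
    ∫⁻ p in branch N a ⁻¹' B ∩ cylinder N a, GNdensity N p =
      ∫⁻ q in B ∩ imageCylinder N a, GNdensity N q := by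
  have hpos : ∀ p ∈ cylinder N a, 0 < p.1 ∧ 0 < p.2 := fun p hp =>
    ⟨((mem_digitInterval_iff ha).1 hp.1).1, hp.2.1⟩
  have hder : ∀ p ∈ cylinder N a,
      HasFDerivWithinAt (branch N a) (fderiv ℝ (branch N a) p) (cylinder N a) p := by
    intro p hp
    have hay : (a : ℝ) + p.2 ≠ 0 := by have := (hpos p hp).2; positivity
    exact (hasFDerivAt_branch (hpos p hp).1.ne' hay).differentiableAt.hasFDerivAt
      |>.hasFDerivWithinAt
  have hcov := lintegral_image_eq_lintegral_abs_det_fderiv_mul volume measurableSet_cylinder hder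
    (bijOn_branch hN ha).injOn (B.indicator (GNdensity N))
  rw [(bijOn_branch hN ha).image_eq, lintegral_indicator hB, Measure.restrict_restrict hB] at hcov
  rw [hcov, ← Measure.restrict_restrict (measurable_branch hB),
    ← lintegral_indicator (measurable_branch hB)]
  refine setLIntegral_congr_fun measurableSet_cylinder fun p hp => ?_
  by_cases h : branch N a p ∈ B
  · rw [indicator_of_mem h, indicator_of_mem (mem_preimage.2 h),
      abs_det_fderiv_branch_mul_GNdensity (hpos p hp).1 (hpos p hp).2]
  · rw [indicator_of_notMem h, indicator_of_notMem (show p ∉ branch N a ⁻¹' B from h), mul_zero]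

theorem GNbar_apply_of_subset {S : Set (ℝ × ℝ)} (hS : MeasurableSet S)
    (hSI : S ⊆ Icc 0 1 ×ˢ Icc 0 1) : GNbar N S = ∫⁻ p in S, GNdensity N p := by
  rw [GNbar, withDensity_apply _ hS, Measure.restrict_restrict hS, inter_eq_left.2 hSI]
  rfl

theorem GNbar_preimage_branch_inter_cylinder (hN : 0 < N) (ha : N ≤ a) {B : Set (ℝ × ℝ)}
    (hB : MeasurableSet B) :
    GNbar N (branch N a ⁻¹' B ∩ cylinder N a) = GNbar N (B ∩ imageCylinder N a) := by
  rw [GNbar_apply_of_subset ((measurable_branch hB).inter measurableSet_cylinder)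
      (inter_subset_right.trans (cylinder_subset ha)),
    GNbar_apply_of_subset (hB.inter measurableSet_imageCylinder)
      (inter_subset_right.trans (imageCylinder_subset ha))]
  exact setLIntegral_GNdensity_preimage_branch hN (hN.trans_le ha) hB

theorem GNbar_absolutelyContinuous (N : ℕ) : GNbar N ≪ volume :=
  (withDensity_absolutelyContinuous _ _).trans
    (Measure.absolutelyContinuous_of_le Measure.restrict_le_self)

theorem GNbar_compl_eq_zero_of_ae_eq {s : Set (ℝ × ℝ)}
    (hs : s =ᵐ[volume] Icc (0 : ℝ) 1 ×ˢ Icc (0 : ℝ) 1) :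
    GNbar N sᶜ = 0 := by
  apply withDensity_absolutelyContinuous
  rw [Measure.restrict_apply' (measurableSet_Icc.prod measurableSet_Icc), ← sdiff_eq_compl_inter]
  exact (ae_eq_set.1 hs).2

theorem TNbar_eq_branch (ha : 0 < a) {p : ℝ × ℝ} (hp : p ∈ cylinder N a)
    (hirr : Irrational p.1) : TNbar N p = branch N a p := by
  obtain ⟨hx, h₁, h₂⟩ := (mem_digitInterval_iff ha).1 hp.1
  have hfloor : ⌊(N : ℝ) / p.1⌋ = a := by
    rw [Int.floor_eq_iff]; push_cast; constructor <;> linarith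
  have hfloor' : ⌊(N : ℝ) / p.1⌋₊ = a := by
    rw [Nat.floor_eq_iff (by positivity)]; constructor <;> linarith
  simp [TNbar, TN, hirr, branch, hfloor, hfloor']

theorem TNbar_preimage_inter_cylinder_ae_eq (ha : 0 < a) (B : Set (ℝ × ℝ)) :
    (TNbar N ⁻¹' B ∩ cylinder N a : Set (ℝ × ℝ)) =ᵐ[volume]
      (branch N a ⁻¹' B ∩ cylinder N a : Set (ℝ × ℝ)) := by
  filter_upwards [ae_irrational_fst] with p hirr
  refine propext (and_congr_left fun hp => ?_)
  change TNbar N p ∈ B ↔ branch N a p ∈ B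
  rw [TNbar_eq_branch ha hp hirr]

end NContinuedFraction

open NContinuedFraction in
theorem GNbar_invariant_general (N : ℕ) (hN : 1 ≤ N) (B : Set (ℝ × ℝ))
    (hB : MeasurableSet B) :
    GNbar N (TNbar N ⁻¹' B) = GNbar N B := by
  have hle : ∀ n, N ≤ N + n := Nat.le_add_right N
  calc GNbar N (TNbar N ⁻¹' B)
      = ∑' n, GNbar N (TNbar N ⁻¹' B ∩ cylinder N (N + n)) :=
        measure_eq_tsum_measure_inter (fun _ => measurableSet_cylinder)
          ((pairwise_disjoint_cylinder N).comp_of_injective (add_right_injective N))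
          (GNbar_compl_eq_zero_of_ae_eq (iUnion_cylinder_ae_eq hN)) _
    _ = ∑' n, GNbar N (branch N (N + n) ⁻¹' B ∩ cylinder N (N + n)) := tsum_congr fun n =>
        measure_congr ((GNbar_absolutelyContinuous N).ae_eq
          (TNbar_preimage_inter_cylinder_ae_eq (hN.trans (hle n)) B))
    _ = ∑' n, GNbar N (B ∩ imageCylinder N (N + n)) := tsum_congr fun n =>
        GNbar_preimage_branch_inter_cylinder hN (hle n) hB
    _ = GNbar N B := (measure_eq_tsum_measure_inter (fun _ => measurableSet_imageCylinder)
          ((pairwise_disjoint_imageCylinder N).comp_of_injective (add_right_injective N))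
          (GNbar_compl_eq_zero_of_ae_eq (iUnion_imageCylinder_ae_eq hN)) _).symm

/-- The extended measure `Ḡ_N` is preserved by the natural extension map `T̄_N`:
for every Borel set `B ⊆ I²`, `Ḡ_N(T̄_N⁻¹(B)) = Ḡ_N(B)`. -/
theorem GNbar_invariant (N : ℕ) (hN : 1 ≤ N) (B : Set (ℝ × ℝ))
    (hB : MeasurableSet B) (hBI : B ⊆ Icc (0:ℝ) 1 ×ˢ Icc (0:ℝ) 1) :
    GNbar N (TNbar N ⁻¹' B) = GNbar N B :=
  GNbar_invariant_general N hN B hB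
end
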